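/- arXiv:1902.09465 — 3 statements merged into one kernel-verified Lean document; each statement's English description precedes it below -/
import Mathlib

section
/- Let n, k, h be natural numbers with 1 ≤ k and k + h < n. Let d, d̂ : Fin n → ℝ be functions (true distances and estimates), let α : Fin n → ℝ be nonnegative confidence radii, and suppose |d̂ i − d i| ≤ α i for every i. Let σ be a permutation of Fin n that sorts the estimates nondecreasingly, i.e., d̂(σ 1) ≤ d̂(σ 2) ≤ … ≤ d̂(σ n). Let Ŝ_low = {σ 1, …, σ k}, Ŝ_high = {σ(k+1+h), …, σ n}, and Ŝ = {σ 1, …, σ(k+h)}. Let ℓ₁ be a maximizer of d̂ i + α i over i ∈ Ŝ_low and ℓ₂ a minimizer of d̂ i − α i over i ∈ Ŝ_high. If the termination condition d̂(ℓ₁) + α(ℓ₁) ≤ d̂(ℓ₂) − α(ℓ₂) holds, then (a) d j ≤ d i for every j ∈ Ŝ_low and every i ∈ Ŝ_high, and (b) for every subset T of Fin n with |T| = k such that d j < d i for all j ∈ T and all i ∉ T, one has T ⊆ Ŝ. -/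
/-- Correctness step in the proof of Theorem 1 of
"Adaptive Estimation for Approximate k-Nearest-Neighbor Computations":
on the good event, when the termination condition holds, every point in
`Slow` is truly at least as close as every point in `Shigh`, and the
returned set `Shat` contains the set of `k` nearest neighbors.
(Indices are 0-based: 1-indexed `σ 1, …, σ k` becomes `σ i` for `i < k`, etc.) -/
theorem adaptive_knn_correctness
    (n k h : ℕ) (hk : 1 ≤ k) (hkhn : k + h < n)
    (d dhat α : Fin n → ℝ)
    (hα : ∀ i, 0 ≤ α i)
    (hconc : ∀ i, |dhat i - d i| ≤ α i)
    (σ : Equiv.Perm (Fin n))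
    (hσ : Monotone (fun i => dhat (σ i)))
    (Slow Shigh Shat : Set (Fin n))
    (hSlow : Slow = ⇑σ '' {i : Fin n | (i : ℕ) < k})
    (hShigh : Shigh = ⇑σ '' {i : Fin n | k + h ≤ (i : ℕ)})
    (hShat : Shat = ⇑σ '' {i : Fin n | (i : ℕ) < k + h})
    (ℓ₁ ℓ₂ : Fin n)
    (hℓ₁mem : ℓ₁ ∈ Slow)
    (hℓ₁max : ∀ i ∈ Slow, dhat i + α i ≤ dhat ℓ₁ + α ℓ₁)
    (hℓ₂mem : ℓ₂ ∈ Shigh)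
    (hℓ₂min : ∀ i ∈ Shigh, dhat ℓ₂ - α ℓ₂ ≤ dhat i - α i)
    (hterm : dhat ℓ₁ + α ℓ₁ ≤ dhat ℓ₂ - α ℓ₂) :
    (∀ j ∈ Slow, ∀ i ∈ Shigh, d j ≤ d i) ∧
    (∀ T : Finset (Fin n), T.card = k →
      (∀ j ∈ T, ∀ i ∉ T, d j < d i) → ↑T ⊆ Shat) := by

  have key : ∀ j ∈ Slow, ∀ i ∈ Shigh, d j ≤ d i := by
    intro j hj i hi
    have h1 := abs_le.mp (hconc j)
    have h2 := abs_le.mp (hconc i)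
    have h3 := hℓ₁max j hj
    have h4 := hℓ₂min i hi
    linarith [h1.1, h1.2, h2.1, h2.2]
  refine ⟨key, ?_⟩
  intro T hT hsep t ht
  by_contra htS
  have htS' : ∀ m : Fin n, σ m = t → k + h ≤ (m : ℕ) := by
    intro m hm
    by_contra hlt
    push_neg at hlt
    exact htS (hShat ▸ ⟨m, hlt, hm⟩)
  have ht' : t ∈ Shigh := by
    rw [hShigh]
    exact ⟨σ.symm t, htS' _ (by simp), by simp⟩
  set Flow : Finset (Fin n) := (Finset.univ.filter fun i : Fin n => (i : ℕ) < k).image σ with hFlow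
  have hFlowSlow : (↑Flow : Set (Fin n)) = Slow := by
    simp [hFlow, hSlow, Finset.coe_image, Finset.coe_filter]
  have hFcard : Flow.card = k := by
    rw [Finset.card_image_of_injective _ σ.injective]
    have : (Finset.univ.filter fun i : Fin n => (i : ℕ) < k) =
        (Finset.range k).attachFin (fun m hm => lt_of_lt_of_le (Finset.mem_range.mp hm) (by omega)) := by
      ext i
      simp [Finset.mem_attachFin]
    rw [this, Finset.card_attachFin, Finset.card_range]
  have htF : t ∉ Flow := by
    intro hmem
    rw [hFlow, Finset.mem_image] at hmem
    obtain ⟨m, hm, hmt⟩ := hmem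
    have := htS' m hmt
    simp at hm
    omega
  have hnot : ¬ Flow ⊆ T := by
    intro hsub
    have := Finset.eq_of_subset_of_card_le hsub (by omega)
    rw [← this] at ht
    exact htF ht
  obtain ⟨j, hjF, hjT⟩ := Finset.not_subset.mp hnot
  have hjSlow : j ∈ Slow := hFlowSlow ▸ hjF
  have := hsep t ht j hjT
  have := key j hjSlow t ht'
  linarith
end

section
/- Let n, k, h be natural numbers with 1 ≤ k and k + h < n. Let d : Fin n → ℝ be nondecreasing (d 1 ≤ d 2 ≤ … ≤ d n), let d̂ : Fin n → ℝ and let α : Fin n → ℝ be nonnegative, with |d̂ i − d i| ≤ α i for every i. Set γ = (d k + d(k+1+h))/2 and define the predicate bad(i) by: if i ≤ k, bad(i) ↔ d̂ i > γ − 3·α i; if i ≥ k+1+h, bad(i) ↔ d̂ i < γ + 3·α i; otherwise (k < i < k+1+h), bad(i) ↔ α i > (d(k+1+h) − d k)/4. Let σ be a permutation of Fin n sorting d̂ nondecreasingly, let ℓ₁ be a maximizer of d̂ i + α i over {σ 1, …, σ k}, let ℓ₂ be a minimizer of d̂ i − α i over {σ(k+1+h), …, σ n}, and let b₂ be a maximizer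 of α i over the set {ℓ₂, σ(k+1), …, σ(k+h)}. If the termination condition fails, i.e., d̂(ℓ₁) + α(ℓ₁) > d̂(ℓ₂) − α(ℓ₂), then bad(ℓ₁) holds or bad(b₂) holds. -/
lemma perm_stab {n : ℕ} (τ : Equiv.Perm (Fin n)) (P : Fin n → Prop) [DecidablePred P]
    (h : ∀ x, P x → P (τ x)) (x : Fin n) (hx : P (τ x)) : P x := by
  classical
  set s := Finset.univ.filter P with hs
  have hsub : s.image τ ⊆ s := by
    intro y hy
    obtain ⟨z, hz, rfl⟩ := Finset.mem_image.mp hy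
    simp only [hs, Finset.mem_filter, Finset.mem_univ, true_and] at hz ⊢
    exact h z hz
  have heq : s.image τ = s :=
    Finset.eq_of_subset_of_card_le hsub
      (le_of_eq (Finset.card_image_of_injective s τ.injective).symm)
  have hmem : τ x ∈ s := by
    simp only [hs, Finset.mem_filter, Finset.mem_univ, true_and]; exact hx
  rw [← heq] at hmem
  obtain ⟨y, hy, hyx⟩ := Finset.mem_image.mp hmem
  have : y = x := τ.injective hyx
  subst this
  simpa [hs] using hy

/-- Lemma 2 in "Adaptive Estimation for Approximate k-Nearest-Neighbor
Computations": on the good event, if the termination condition fails, then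
`bad ℓ₁` or `bad b₂` occurs.  The true distances `d` are nondecreasing;
indices are 0-based, so the 1-indexed `d k` and `d (k+1+h)` become
`d ⟨k-1, _⟩` and `d ⟨k+h, _⟩`, `i ≤ k` becomes `(i : ℕ) < k`, and
`i ≥ k+1+h` becomes `k + h ≤ (i : ℕ)`. -/
theorem adaptive_knn_one_is_bad
    (n k h : ℕ) (hk : 1 ≤ k) (hkhn : k + h < n)
    (d dhat α : Fin n → ℝ)
    (hd : Monotone d)
    (hα : ∀ i, 0 ≤ α i)
    (hconc : ∀ i, |dhat i - d i| ≤ α i)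
    (γ : ℝ)
    (hγ : γ = (d ⟨k - 1, by omega⟩ + d ⟨k + h, hkhn⟩) / 2)
    (bad : Fin n → Prop)
    (hbad : ∀ i : Fin n, bad i ↔
      if (i : ℕ) < k then dhat i > γ - 3 * α i
      else if k + h ≤ (i : ℕ) then dhat i < γ + 3 * α i
      else α i > (d ⟨k + h, hkhn⟩ - d ⟨k - 1, by omega⟩) / 4)
    (σ : Equiv.Perm (Fin n))
    (hσ : Monotone (fun i => dhat (σ i)))
    (ℓ₁ ℓ₂ b₂ : Fin n)
    (hℓ₁mem : ℓ₁ ∈ ⇑σ '' {i : Fin n | (i : ℕ) < k})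
    (hℓ₁max : ∀ i ∈ ⇑σ '' {i : Fin n | (i : ℕ) < k},
      dhat i + α i ≤ dhat ℓ₁ + α ℓ₁)
    (hℓ₂mem : ℓ₂ ∈ ⇑σ '' {i : Fin n | k + h ≤ (i : ℕ)})
    (hℓ₂min : ∀ i ∈ ⇑σ '' {i : Fin n | k + h ≤ (i : ℕ)},
      dhat ℓ₂ - α ℓ₂ ≤ dhat i - α i)
    (hb₂mem : b₂ ∈ insert ℓ₂ (⇑σ '' {i : Fin n | k ≤ (i : ℕ) ∧ (i : ℕ) < k + h}))
    (hb₂max : ∀ i ∈ insert ℓ₂ (⇑σ '' {i : Fin n | k ≤ (i : ℕ) ∧ (i : ℕ) < k + h}),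
      α i ≤ α b₂)
    (hterm : dhat ℓ₂ - α ℓ₂ < dhat ℓ₁ + α ℓ₁) :
    bad ℓ₁ ∨ bad b₂ := by
  classical
  by_contra hcon
  push_neg at hcon
  obtain ⟨G1, G2⟩ := hcon
  rw [hbad ℓ₁] at G1
  rw [hbad b₂] at G2
  obtain ⟨p₁, hp₁, hσ1⟩ := hℓ₁mem
  obtain ⟨p₂, hp₂, hσ2⟩ := hℓ₂mem
  have hp₁' : (p₁ : ℕ) < k := hp₁
  have hp₂' : k + h ≤ (p₂ : ℕ) := hp₂
  have hkn : k - 1 < n := by omega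
  -- abbreviations as restated facts
  have hγ' : γ = (d ⟨k - 1, hkn⟩ + d ⟨k + h, hkhn⟩) / 2 := hγ
  have hub : ∀ i, dhat i ≤ d i + α i := by
    intro i; have := (abs_le.mp (hconc i)).2; linarith
  have hlb : ∀ i, d i - α i ≤ dhat i := by
    intro i; have := (abs_le.mp (hconc i)).1; linarith
  have hdle : ∀ i j : Fin n, (i : ℕ) ≤ (j : ℕ) → d i ≤ d j := by
    intro i j hij; exact hd hij
  have hDlh : d ⟨k - 1, hkn⟩ ≤ d ⟨k + h, hkhn⟩ :=
    hdle _ _ (show k - 1 ≤ k + h by omega)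
  have hdS : ∀ i : Fin n, (i : ℕ) < k → d i ≤ d ⟨k - 1, hkn⟩ := by
    intro i hi; exact hdle i _ (show (i : ℕ) ≤ k - 1 by omega)
  have hdK : ∀ i : Fin n, k ≤ (i : ℕ) → d ⟨k - 1, hkn⟩ ≤ d i := by
    intro i hi; exact hdle _ i (show k - 1 ≤ (i : ℕ) by omega)
  have hdH : ∀ i : Fin n, (i : ℕ) < k + h → d i ≤ d ⟨k + h, hkhn⟩ := by
    intro i hi; exact hdle i _ (show (i : ℕ) ≤ k + h by omega)
  have hdB : ∀ i : Fin n, k + h ≤ (i : ℕ) → d ⟨k + h, hkhn⟩ ≤ d i := by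
    intro i hi; exact hdle _ i (show k + h ≤ (i : ℕ) from hi)
  have hsort : ∀ p q : Fin n, (p : ℕ) ≤ (q : ℕ) → dhat (σ p) ≤ dhat (σ q) := by
    intro p q hpq; exact hσ (show p ≤ q from hpq)
  have hmax : ∀ q : Fin n, (q : ℕ) < k → dhat (σ q) + α (σ q) ≤ dhat ℓ₁ + α ℓ₁ :=
    fun q hq => hℓ₁max _ ⟨q, hq, rfl⟩
  have hmin : ∀ q : Fin n, k + h ≤ (q : ℕ) → dhat ℓ₂ - α ℓ₂ ≤ dhat (σ q) - α (σ q) :=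
    fun q hq => hℓ₂min _ ⟨q, hq, rfl⟩
  have hα2b : α ℓ₂ ≤ α b₂ := hb₂max ℓ₂ (Set.mem_insert _ _)
  have hMα : ∀ q : Fin n, k ≤ (q : ℕ) → (q : ℕ) < k + h → α (σ q) ≤ α b₂ :=
    fun q h1 h2 => hb₂max _ (Set.mem_insert_of_mem _ ⟨q, ⟨h1, h2⟩, rfl⟩)
  have h12 : dhat ℓ₁ ≤ dhat ℓ₂ := by
    have := hsort p₁ p₂ (by omega); rw [hσ1, hσ2] at this; exact this
  have hb2pair : dhat ℓ₁ ≤ dhat b₂ ∧ dhat b₂ ≤ dhat ℓ₂ := by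
    rcases Set.mem_insert_iff.mp hb₂mem with heq | ⟨q, ⟨hq1, hq2⟩, hqe⟩
    · subst heq; exact ⟨h12, le_refl _⟩
    · subst hqe
      constructor
      · have := hsort p₁ q (by omega); rw [hσ1] at this; exact this
      · have := hsort q p₂ (by omega); rw [hσ2] at this; exact this
    
  obtain ⟨hb2low, hb2high⟩ := hb2pair
  -- pigeonhole instantiations
  have PH1 : k ≤ (ℓ₁ : ℕ) → ∃ q : Fin n, k + h ≤ (q : ℕ) ∨ (k ≤ (q : ℕ) ∧ (q : ℕ) < k + h) → True := fun _ => ⟨p₁, fun _ => trivial⟩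
  clear PH1
  have PH1 : k ≤ (ℓ₁ : ℕ) → ∃ q : Fin n, k ≤ (q : ℕ) ∧ ((σ q : Fin n) : ℕ) < k := by
    intro hidx
    by_contra hno
    push_neg at hno
    have := perm_stab σ (fun x => k ≤ (x : ℕ)) (fun x hx => hno x hx) p₁
      (by rw [hσ1]; exact hidx)
    omega
  have PH2 : (ℓ₂ : ℕ) < k + h → ∃ q : Fin n, (q : ℕ) < k + h ∧ k + h ≤ ((σ q : Fin n) : ℕ) := by
    intro hidx
    by_contra hno
    push_neg at hno
    have := perm_stab σ (fun x => (x : ℕ) < k + h) (fun x hx => hno x hx) p₂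
      (by rw [hσ2]; exact hidx)
    omega
  have MidGL : k ≤ (ℓ₁ : ℕ) → (ℓ₁ : ℕ) < k + h →
      ∃ q : Fin n, (k ≤ (q : ℕ) ∧ (q : ℕ) < k + h) ∧
        (((σ q : Fin n) : ℕ) < k ∨ k + h ≤ ((σ q : Fin n) : ℕ)) := by
    intro hidx1 hidx2
    by_contra hno
    push_neg at hno
    have key : ∀ x : Fin n, (k ≤ (x : ℕ) ∧ (x : ℕ) < k + h) →
        (k ≤ ((σ x : Fin n) : ℕ) ∧ ((σ x : Fin n) : ℕ) < k + h) := by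
      intro x hx
      have := hno x hx
      omega
    have := perm_stab σ (fun x => k ≤ (x : ℕ) ∧ (x : ℕ) < k + h) key p₁
      (by rw [hσ1]; exact ⟨hidx1, hidx2⟩)
    omega
  -- main case analysis
  rcases Nat.lt_or_ge ((ℓ₁ : ℕ)) k with hc1 | hc1
  · -- ℓ₁ has true index < k
    rw [if_pos hc1] at G1
    push_neg at G1
    -- G1 : dhat ℓ₁ ≤ γ - 3 * α ℓ₁
    rcases Nat.lt_or_ge ((b₂ : ℕ)) k with hc2 | hc2
    · -- b₂ in S
      rw [if_pos hc2] at G2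
      push_neg at G2
      -- G2 : dhat b₂ ≤ γ - 3 * α b₂
      rcases Nat.lt_or_ge ((ℓ₂ : ℕ)) (k + h) with hc3 | hc3
      · obtain ⟨p, hpkh, hpbig⟩ := PH2 hc3
        rcases Nat.lt_or_ge ((p : ℕ)) k with hpk | hpk
        · -- witness at position < k : U ≥ Dh
          have h1 := hmax p hpk
          have h2 := hlb (σ p)
          have h3 := hdB (σ p) hpbig
          linarith [hα ℓ₁, hα ℓ₂, hα b₂, hα (σ p), hDlh, h12, hb2low]
        · -- witness in middle positions
          have h1 := hMα p hpk hpkh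
          have h2 := hlb (σ p)
          have h3 := hdB (σ p) hpbig
          have h4 : dhat (σ p) ≤ dhat ℓ₂ := by
            have := hsort p p₂ (by omega); rw [hσ2] at this; exact this
          linarith [hα ℓ₁, hα ℓ₂, hα b₂, hα (σ p), hDlh, hb2low]
      · -- ℓ₂ in Big
        have h1 := hlb ℓ₂
        have h2 := hdB ℓ₂ hc3
        linarith [hα ℓ₁, hα ℓ₂, hα b₂, hDlh, hb2low]
    · rcases Nat.lt_or_ge ((b₂ : ℕ)) (k + h) with hc2' | hc2'
      · -- b₂ in Mid
        rw [if_neg (by omega), if_neg (by omega)] at G2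
        push_neg at G2
        have G2' : α b₂ ≤ (d ⟨k + h, hkhn⟩ - d ⟨k - 1, hkn⟩) / 4 := G2
        rcases Nat.lt_or_ge ((ℓ₂ : ℕ)) (k + h) with hc3 | hc3
        · obtain ⟨p, hpkh, hpbig⟩ := PH2 hc3
          rcases Nat.lt_or_ge ((p : ℕ)) k with hpk | hpk
          · have h1 := hmax p hpk
            have h2 := hlb (σ p)
            have h3 := hdB (σ p) hpbig
            linarith [hα ℓ₁, hα ℓ₂, hα b₂, hα (σ p), hDlh, h12]
          · have h1 := hMα p hpk hpkh
            have h2 := hlb (σ p)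
            have h3 := hdB (σ p) hpbig
            have h4 : dhat (σ p) ≤ dhat ℓ₂ := by
              have := hsort p p₂ (by omega); rw [hσ2] at this; exact this
            linarith [hα ℓ₁, hα ℓ₂, hα b₂, hα (σ p), hDlh]
        · have h1 := hlb ℓ₂
          have h2 := hdB ℓ₂ hc3
          linarith [hα ℓ₁, hα ℓ₂, hα b₂, hDlh]
      · -- b₂ in Big
        rw [if_neg (by omega), if_pos (by omega)] at G2
        push_neg at G2
        -- G2 : γ + 3 * α b₂ ≤ dhat b₂
        linarith [hα ℓ₁, hα ℓ₂, hα b₂, hDlh, hb2high]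
  · rw [if_neg (by omega)] at G1
    rcases Nat.lt_or_ge ((ℓ₁ : ℕ)) (k + h) with hm1 | hm1
    · -- ℓ₁ in Mid
      rw [if_neg (by omega)] at G1
      push_neg at G1
      have G1' : α ℓ₁ ≤ (d ⟨k + h, hkhn⟩ - d ⟨k - 1, hkn⟩) / 4 := G1
      have hd1a : d ⟨k - 1, hkn⟩ ≤ d ℓ₁ := hdK ℓ₁ hc1
      have hd1b : d ℓ₁ ≤ d ⟨k + h, hkhn⟩ := hdH ℓ₁ hm1
      rcases Nat.lt_or_ge ((b₂ : ℕ)) k with hc2 | hc2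
      · -- b₂ in S : derive α b₂ ≤ Δ/4, then unified middle analysis
        rw [if_pos hc2] at G2
        push_neg at G2
        have ht : α b₂ ≤ (d ⟨k + h, hkhn⟩ - d ⟨k - 1, hkn⟩) / 4 := by
          have := hlb ℓ₁
          linarith [hα ℓ₁]
        -- unified analysis below needs ht; duplicate via helper
        obtain ⟨q, ⟨hq1, hq2⟩, hqcls⟩ := MidGL hc1 hm1
        have hαq := hMα q hq1 hq2
        have hx1 : dhat ℓ₁ ≤ dhat (σ q) := by
          have := hsort p₁ q (by omega); rw [hσ1] at this; exact this
        have hx2 : dhat (σ q) ≤ dhat ℓ₂ := by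
          have := hsort q p₂ (by omega); rw [hσ2] at this; exact this
        rcases hqcls with hxS | hxB
        · -- x has index < k, so dhat ℓ₁ ≤ Dl + t
          have hdx := hdS (σ q) hxS
          have hux := hub (σ q)
          rcases Nat.lt_or_ge ((ℓ₂ : ℕ)) (k + h) with hc3 | hc3
          · obtain ⟨p, hpkh, hpbig⟩ := PH2 hc3
            rcases Nat.lt_or_ge ((p : ℕ)) k with hpk | hpk
            · have h1 := hmax p hpk
              have h2 := hlb (σ p)
              have h3 := hdB (σ p) hpbig
              linarith [hα ℓ₁, hα ℓ₂, hα b₂, hα (σ p), hα (σ q), hDlh, h12]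
            · have h1 := hMα p hpk hpkh
              have h2 := hlb (σ p)
              have h3 := hdB (σ p) hpbig
              have h4 : dhat (σ p) ≤ dhat ℓ₂ := by
                have := hsort p p₂ (by omega); rw [hσ2] at this; exact this
              linarith [hα ℓ₁, hα ℓ₂, hα b₂, hα (σ p), hα (σ q), hDlh]
          · have h1 := hlb ℓ₂
            have h2 := hdB ℓ₂ hc3
            linarith [hα ℓ₁, hα ℓ₂, hα b₂, hα (σ q), hDlh]
        · -- x has index ≥ k+h, so dhat ℓ₂ ≥ Dh - t
          have hdx := hdB (σ q) hxB
          have hlx := hlb (σ q)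
          obtain ⟨q', hq'1, hq'2⟩ := PH1 hc1
          rcases Nat.lt_or_ge ((q' : ℕ)) (k + h) with hq'm | hq'm
          · have h1 := hMα q' hq'1 hq'm
            have h2 := hub (σ q')
            have h3 := hdS (σ q') hq'2
            have h4 : dhat ℓ₁ ≤ dhat (σ q') := by
              have := hsort p₁ q' (by omega); rw [hσ1] at this; exact this
            linarith [hα ℓ₁, hα ℓ₂, hα b₂, hα (σ q), hα (σ q'), hDlh]
          · have h1 := hmin q' hq'm
            have h2 := hub (σ q')
            have h3 := hdS (σ q') hq'2
            linarith [hα ℓ₁, hα ℓ₂, hα b₂, hα (σ q), hα (σ q'), hDlh, h12]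
      · rcases Nat.lt_or_ge ((b₂ : ℕ)) (k + h) with hc2' | hc2'
        · -- b₂ in Mid
          rw [if_neg (by omega), if_neg (by omega)] at G2
          push_neg at G2
          have ht : α b₂ ≤ (d ⟨k + h, hkhn⟩ - d ⟨k - 1, hkn⟩) / 4 := G2
          obtain ⟨q, ⟨hq1, hq2⟩, hqcls⟩ := MidGL hc1 hm1
          have hαq := hMα q hq1 hq2
          have hx1 : dhat ℓ₁ ≤ dhat (σ q) := by
            have := hsort p₁ q (by omega); rw [hσ1] at this; exact this
          have hx2 : dhat (σ q) ≤ dhat ℓ₂ := by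
            have := hsort q p₂ (by omega); rw [hσ2] at this; exact this
          rcases hqcls with hxS | hxB
          · have hdx := hdS (σ q) hxS
            have hux := hub (σ q)
            rcases Nat.lt_or_ge ((ℓ₂ : ℕ)) (k + h) with hc3 | hc3
            · obtain ⟨p, hpkh, hpbig⟩ := PH2 hc3
              rcases Nat.lt_or_ge ((p : ℕ)) k with hpk | hpk
              · have h1 := hmax p hpk
                have h2 := hlb (σ p)
                have h3 := hdB (σ p) hpbig
                linarith [hα ℓ₁, hα ℓ₂, hα b₂, hα (σ p), hα (σ q), hDlh, h12]
              · have h1 := hMα p hpk hpkh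
                have h2 := hlb (σ p)
                have h3 := hdB (σ p) hpbig
                have h4 : dhat (σ p) ≤ dhat ℓ₂ := by
                  have := hsort p p₂ (by omega); rw [hσ2] at this; exact this
                linarith [hα ℓ₁, hα ℓ₂, hα b₂, hα (σ p), hα (σ q), hDlh]
            · have h1 := hlb ℓ₂
              have h2 := hdB ℓ₂ hc3
              linarith [hα ℓ₁, hα ℓ₂, hα b₂, hα (σ q), hDlh]
          · have hdx := hdB (σ q) hxB
            have hlx := hlb (σ q)
            obtain ⟨q', hq'1, hq'2⟩ := PH1 hc1
            rcases Nat.lt_or_ge ((q' : ℕ)) (k + h) with hq'm | hq'm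
            · have h1 := hMα q' hq'1 hq'm
              have h2 := hub (σ q')
              have h3 := hdS (σ q') hq'2
              have h4 : dhat ℓ₁ ≤ dhat (σ q') := by
                have := hsort p₁ q' (by omega); rw [hσ1] at this; exact this
              linarith [hα ℓ₁, hα ℓ₂, hα b₂, hα (σ q), hα (σ q'), hDlh]
            · have h1 := hmin q' hq'm
              have h2 := hub (σ q')
              have h3 := hdS (σ q') hq'2
              linarith [hα ℓ₁, hα ℓ₂, hα b₂, hα (σ q), hα (σ q'), hDlh, h12]
        · -- b₂ in Big
          rw [if_neg (by omega), if_pos (by omega)] at G2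
          push_neg at G2
          -- G2 : γ + 3 * α b₂ ≤ dhat b₂
          obtain ⟨q', hq'1, hq'2⟩ := PH1 hc1
          rcases Nat.lt_or_ge ((q' : ℕ)) (k + h) with hq'm | hq'm
          · have h1 := hMα q' hq'1 hq'm
            have h2 := hub (σ q')
            have h3 := hdS (σ q') hq'2
            have h4 : dhat ℓ₁ ≤ dhat (σ q') := by
              have := hsort p₁ q' (by omega); rw [hσ1] at this; exact this
            linarith [hα ℓ₁, hα ℓ₂, hα b₂, hα (σ q'), hDlh, hb2high]
          · have h1 := hmin q' hq'm
            have h2 := hub (σ q')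
            have h3 := hdS (σ q') hq'2
            linarith [hα ℓ₁, hα ℓ₂, hα b₂, hα (σ q'), hDlh, hb2high, h12,
              hlb ℓ₁, hd1a]
    · -- ℓ₁ in Big
      rw [if_pos (by omega)] at G1
      push_neg at G1
      -- G1 : γ + 3 * α ℓ₁ ≤ dhat ℓ₁
      rcases Nat.lt_or_ge ((b₂ : ℕ)) k with hc2 | hc2
      · -- b₂ in S: α b₂ forced to 0
        rw [if_pos hc2] at G2
        push_neg at G2
        have ht : α b₂ ≤ (d ⟨k + h, hkhn⟩ - d ⟨k - 1, hkn⟩) / 4 := by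
          linarith [hα ℓ₁, hα b₂, hDlh, hb2low]
        obtain ⟨q', hq'1, hq'2⟩ := PH1 (by omega)
        rcases Nat.lt_or_ge ((q' : ℕ)) (k + h) with hq'm | hq'm
        · have h1 := hMα q' hq'1 hq'm
          have h2 := hub (σ q')
          have h3 := hdS (σ q') hq'2
          have h4 : dhat ℓ₁ ≤ dhat (σ q') := by
            have := hsort p₁ q' (by omega); rw [hσ1] at this; exact this
          linarith [hα ℓ₁, hα ℓ₂, hα b₂, hα (σ q'), hDlh, h12]
        · have h1 := hmin q' hq'm
          have h2 := hub (σ q')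
          have h3 := hdS (σ q') hq'2
          linarith [hα ℓ₁, hα ℓ₂, hα b₂, hα (σ q'), hDlh, h12]
      · rcases Nat.lt_or_ge ((b₂ : ℕ)) (k + h) with hc2' | hc2'
        · -- b₂ in Mid
          rw [if_neg (by omega), if_neg (by omega)] at G2
          push_neg at G2
          have ht : α b₂ ≤ (d ⟨k + h, hkhn⟩ - d ⟨k - 1, hkn⟩) / 4 := G2
          obtain ⟨q', hq'1, hq'2⟩ := PH1 (by omega)
          rcases Nat.lt_or_ge ((q' : ℕ)) (k + h) with hq'm | hq'm
          · have h1 := hMα q' hq'1 hq'm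
            have h2 := hub (σ q')
            have h3 := hdS (σ q') hq'2
            have h4 : dhat ℓ₁ ≤ dhat (σ q') := by
              have := hsort p₁ q' (by omega); rw [hσ1] at this; exact this
            linarith [hα ℓ₁, hα ℓ₂, hα b₂, hα (σ q'), hDlh, h12]
          · have h1 := hmin q' hq'm
            have h2 := hub (σ q')
            have h3 := hdS (σ q') hq'2
            linarith [hα ℓ₁, hα ℓ₂, hα b₂, hα (σ q'), hDlh, h12]
        · -- b₂ in Big
          rw [if_neg (by omega), if_pos (by omega)] at G2
          push_neg at G2
          obtain ⟨q', hq'1, hq'2⟩ := PH1 (by omega)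
          rcases Nat.lt_or_ge ((q' : ℕ)) (k + h) with hq'm | hq'm
          · have h1 := hMα q' hq'1 hq'm
            have h2 := hub (σ q')
            have h3 := hdS (σ q') hq'2
            have h4 : dhat ℓ₁ ≤ dhat (σ q') := by
              have := hsort p₁ q' (by omega); rw [hσ1] at this; exact this
            linarith [hα ℓ₁, hα ℓ₂, hα b₂, hα (σ q'), hDlh, hb2high]
          · have h1 := hmin q' hq'm
            have h2 := hub (σ q')
            have h3 := hdS (σ q') hq'2
            linarith [hα ℓ₁, hα ℓ₂, hα b₂, hα (σ q'), hDlh, hb2high, h12]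
end

section
/- Let n ≥ 1 and δ ∈ (0, 1). For each i ∈ {1, …, n}, let X_{i,1}, X_{i,2}, … be random variables taking values in [0, 1], all of them mutually independent, with E[X_{i,t}] = d_i for all t. Let β(t, δ') = 2·log(125·log(1.12·t)/δ') and α_i(t) = √(2·β(t, δ/n)/t). Then with probability at least 1 − δ, simultaneously for every i ∈ {1, …, n} and every integer t ≥ 1, the empirical mean satisfies |(1/t)·Σ_{s=1}^{t} X_{i,s} − d_i| ≤ α_i(t). -/
/-! By Hoeffding's lemma each centred sample is `1/4`-sub-Gaussian, so for every `l ≥ 0` the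
exponential `exp (l * S_t)` of the partial sums is a nonnegative submartingale, and Doob's maximal
inequality gives the maximal Hoeffding bound `P (max_{t ≤ v} S_t ≥ ε) ≤ exp (-ε² / (2 v c))`.
On the dyadic block `2^k ≤ t ≤ 2^(k+1)` the threshold `√(t · 2β(t))` is at least its value at
`2^k`, so each block and each sign cost at most `exp (-2β(2^k, δ/n)) ≤ (δ/n) / (10 (k+1))^4`.
These sum to at most `δ/n`, and a union bound over the `n` items finishes the proof. -/

open MeasureTheory ProbabilityTheory Real Finset
open scoped NNReal ENNReal

lemma Real.sqrt_div_mul_self {x t : ℝ} (ht : 0 < t) : √(x / t) * t = √(t * x) := by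
  rw [← Real.sqrt_sq ht.le, ← Real.sqrt_mul' _ (sq_nonneg t), Real.sqrt_sq ht.le]
  congr 1
  field_simp

namespace ProbabilityTheory

variable {Ω : Type*} [MeasurableSpace Ω] {μ : Measure Ω} [IsProbabilityMeasure μ]

lemma ofReal_one_sub_le_of_measure_compl_le {s : Set Ω} {δ : ℝ} (hδ : 0 ≤ δ)
    (h : μ sᶜ ≤ ENNReal.ofReal δ) : ENNReal.ofReal (1 - δ) ≤ μ s := by
  have hunion : 1 ≤ μ s + μ sᶜ := by
    rw [← measure_univ (μ := μ), ← Set.union_compl_self s]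
    exact measure_union_le _ _
  rw [ENNReal.ofReal_sub _ hδ, ENNReal.ofReal_one]
  exact tsub_le_iff_right.mpr (hunion.trans (by gcongr))

lemma one_le_integral_exp_mul {X : Ω → ℝ} (hX : Integrable X μ) (h0 : μ[X] = 0) {l : ℝ}
    (hexp : Integrable (fun ω => exp (l * X ω)) μ) :
    1 ≤ ∫ ω, exp (l * X ω) ∂μ :=
  calc (1 : ℝ) = ∫ ω, (1 + l * X ω) ∂μ := by
        rw [integral_add (integrable_const _) (hX.const_mul l), integral_const_mul, h0]; simp
    _ ≤ ∫ ω, exp (l * X ω) ∂μ := integral_mono ((integrable_const _).add (hX.const_mul l)) hexp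
        fun ω => by linarith [add_one_le_exp (l * X ω)]

variable {Z : ℕ → Ω → ℝ} {c : ℝ≥0}

/-- The `k`-th term involves `Z 0, …, Z k`, so that it is adapted to the natural filtration. -/
lemma submartingale_exp_mul_sum_range (hZm : ∀ s, StronglyMeasurable (Z s))
    (hind : iIndepFun Z μ) (h0 : ∀ s, μ[Z s] = 0) (hsg : ∀ s, HasSubgaussianMGF (Z s) c μ)
    (l : ℝ) :
    Submartingale (fun k ω => exp (l * ∑ s ∈ range (k + 1), Z s ω))
      (Filtration.natural Z hZm) μ := by
  set ℱ := Filtration.natural Z hZm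
  have hint (k : ℕ) : Integrable (fun ω => exp (l * ∑ s ∈ range k, Z s ω)) μ :=
    (HasSubgaussianMGF.sum_of_iIndepFun hind fun s _ => hsg s).integrable_exp_mul l
  have hadapted (k : ℕ) :
      StronglyMeasurable[ℱ k] (fun ω => exp (l * ∑ s ∈ range (k + 1), Z s ω)) := by
    have hsum : StronglyMeasurable[ℱ k] (fun ω => ∑ s ∈ range (k + 1), Z s ω) :=
      Finset.stronglyMeasurable_fun_sum _ fun s hs =>
        (Filtration.stronglyAdapted_natural hZm s).mono
          (ℱ.mono (Nat.lt_succ_iff.mp (Finset.mem_range.mp hs)))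
    exact continuous_exp.comp_stronglyMeasurable (hsum.const_mul l)
  refine submartingale_nat hadapted (fun k => hint (k + 1)) fun k => ?_
  set f : Ω → ℝ := fun ω => exp (l * ∑ s ∈ range (k + 1), Z s ω)
  set g : Ω → ℝ := fun ω => exp (l * Z (k + 1) ω)
  have hsplit : (fun ω => exp (l * ∑ s ∈ range (k + 1 + 1), Z s ω)) = f * g := by
    ext ω
    simp only [f, g, Pi.mul_apply, Finset.sum_range_succ _ (k + 1), mul_add, exp_add]
  have hg : Integrable g μ := (hsg (k + 1)).integrable_exp_mul l
  have hcond : μ[g | ℱ k] =ᵐ[μ] fun _ => μ[g] :=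
    condExp_indep_eq (hZm (k + 1)).measurable.comap_le (ℱ.le k)
      (((comap_measurable (Z (k + 1))).const_mul l).exp.stronglyMeasurable)
      (hind.indep_comap_natural_of_lt hZm (Nat.lt_succ_self k))
  have hpull : μ[f * g | ℱ k] =ᵐ[μ] f * μ[g | ℱ k] :=
    condExp_mul_of_stronglyMeasurable_left (hadapted k) (hsplit ▸ hint (k + 2)) hg
  have hone : 1 ≤ μ[g] := one_le_integral_exp_mul ((hsg (k + 1)).integrable) (h0 (k + 1)) hg
  rw [hsplit]
  filter_upwards [hpull, hcond] with ω hω hω'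
  rw [hω, Pi.mul_apply, hω']
  exact le_mul_of_one_le_right (exp_nonneg _) hone

lemma measure_exists_sum_range_ge_le_exp (hZm : ∀ s, StronglyMeasurable (Z s))
    (hind : iIndepFun Z μ) (h0 : ∀ s, μ[Z s] = 0) (hsg : ∀ s, HasSubgaussianMGF (Z s) c μ)
    {l : ℝ} (hl : 0 ≤ l) (ε : ℝ) (v : ℕ) :
    μ {ω | ∃ t, 1 ≤ t ∧ t ≤ v ∧ ε ≤ ∑ s ∈ range t, Z s ω} ≤
      ENNReal.ofReal (exp (-(l * ε) + c * l ^ 2 * v / 2)) := by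
  obtain _ | N := v
  · simp
  set f : ℕ → Ω → ℝ := fun k ω => exp (l * ∑ s ∈ range (k + 1), Z s ω)
  set M : ℝ≥0 := (exp (l * ε)).toNNReal
  set B := {ω | (M : ℝ) ≤ (range (N + 1)).sup' nonempty_range_add_one fun k => f k ω}
  have hsub : {ω | ∃ t, 1 ≤ t ∧ t ≤ N + 1 ∧ ε ≤ ∑ s ∈ range t, Z s ω} ⊆ B := by
    rintro ω ⟨t, ht1, htN, hε⟩
    have hk : t - 1 ∈ range (N + 1) := Finset.mem_range.mpr (by omega)
    refine Finset.le_sup'_of_le (fun k => f k ω) hk ?_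
    simp only [f, M, Real.coe_toNNReal _ (exp_pos _).le, Nat.sub_add_cancel ht1]
    exact exp_le_exp.mpr (mul_le_mul_of_nonneg_left hε hl)
  have hsum := HasSubgaussianMGF.sum_of_iIndepFun hind (s := range (N + 1)) fun s _ => hsg s
  have hmgf : ∫ ω in B, f N ω ∂μ ≤ exp (c * l ^ 2 * (N + 1 : ℕ) / 2) := by
    refine (setIntegral_le_integral (hsum.integrable_exp_mul l)
      (ae_of_all _ fun ω => (exp_pos _).le)).trans ?_
    refine le_of_le_of_eq (by simpa [mgf, f, mul_comm] using hsum.mgf_le l) ?_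
    push_cast
    ring_nf
  have hdoob := maximal_ineq (submartingale_exp_mul_sum_range hZm hind h0 hsg l)
    (fun k ω => (exp_pos _).le) (ε := M) N
  have hMB : μ B ≤ (M : ℝ≥0∞)⁻¹ * ENNReal.ofReal (exp (c * l ^ 2 * (N + 1 : ℕ) / 2)) :=
    (ENNReal.mul_le_iff_le_inv (by simp [M, exp_pos]) ENNReal.coe_ne_top).mp
      (hdoob.trans (ENNReal.ofReal_le_ofReal hmgf))
  calc _ ≤ μ B := measure_mono hsub
    _ ≤ _ := hMB
    _ = _ := by
      rw [show (M : ℝ≥0∞) = ENNReal.ofReal (exp (l * ε)) from rfl,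
        ← ENNReal.ofReal_inv_of_pos (exp_pos _), ← exp_neg,
        ← ENNReal.ofReal_mul (exp_pos _).le, ← exp_add]

lemma measure_exists_sum_range_ge_le (hZm : ∀ s, StronglyMeasurable (Z s))
    (hind : iIndepFun Z μ) (h0 : ∀ s, μ[Z s] = 0) (hsg : ∀ s, HasSubgaussianMGF (Z s) c μ)
    {ε : ℝ} (hε : 0 ≤ ε) (v : ℕ) :
    μ {ω | ∃ t, 1 ≤ t ∧ t ≤ v ∧ ε ≤ ∑ s ∈ range t, Z s ω} ≤
      ENNReal.ofReal (exp (-ε ^ 2 / (2 * v * c))) := by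
  rcases eq_or_ne ((v : ℝ) * c) 0 with hcv | hcv
  · simp [mul_assoc, hcv, prob_le_one]
  have hpos : 0 < (v : ℝ) * c := lt_of_le_of_ne (by positivity) hcv.symm
  refine (measure_exists_sum_range_ge_le_exp hZm hind h0 hsg
    (div_nonneg hε hpos.le : 0 ≤ ε / (v * c)) ε v).trans_eq ?_
  congr 2
  field_simp
  ring

lemma measure_exists_sqrt_le_sum_range_le (hZm : ∀ s, StronglyMeasurable (Z s))
    (hind : iIndepFun Z μ) (h0 : ∀ s, μ[Z s] = 0) (hsg : ∀ s, HasSubgaussianMGF (Z s) c μ)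
    (hc : 0 < c) {L : ℕ → ℝ} (hL : MonotoneOn L (Set.Ici 1)) (hL0 : ∀ t, 1 ≤ t → 0 ≤ L t) :
    μ {ω | ∃ t, 1 ≤ t ∧ √(4 * c * t * L t) ≤ ∑ s ∈ range t, Z s ω} ≤
      ∑' k, ENNReal.ofReal (exp (-L (2 ^ k))) := by
  set ε : ℕ → ℝ := fun k => √(4 * c * 2 ^ k * L (2 ^ k))
  have hblocks : {ω | ∃ t, 1 ≤ t ∧ √(4 * c * t * L t) ≤ ∑ s ∈ range t, Z s ω} ⊆
      ⋃ k, {ω | ∃ t, 1 ≤ t ∧ t ≤ 2 ^ (k + 1) ∧ ε k ≤ ∑ s ∈ range t, Z s ω} := by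
    rintro ω ⟨t, ht, hω⟩
    have hlow : 2 ^ Nat.log 2 t ≤ t := Nat.pow_log_le_self 2 (by omega)
    have hk0 : 1 ≤ 2 ^ Nat.log 2 t := Nat.one_le_two_pow
    refine Set.mem_iUnion.mpr ⟨Nat.log 2 t, t, ht, (Nat.lt_pow_succ_log_self one_lt_two t).le,
      le_trans (Real.sqrt_le_sqrt ?_) hω⟩
    have hLk := hL (Set.mem_Ici.mpr hk0) (Set.mem_Ici.mpr ht) hlow
    have h2k : (2 : ℝ) ^ Nat.log 2 t ≤ t := by exact_mod_cast hlow
    have hLk0 := hL0 _ hk0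
    gcongr
  have hblock (k : ℕ) : μ {ω | ∃ t, 1 ≤ t ∧ t ≤ 2 ^ (k + 1) ∧ ε k ≤ ∑ s ∈ range t, Z s ω} ≤
      ENNReal.ofReal (exp (-L (2 ^ k))) := by
    refine (measure_exists_sum_range_ge_le hZm hind h0 hsg (Real.sqrt_nonneg _) _).trans_eq ?_
    have hLk := hL0 (2 ^ k) Nat.one_le_two_pow
    rw [Real.sq_sqrt (by positivity)]
    congr 2
    field_simp
    push_cast
    ring
  exact (measure_mono hblocks).trans ((measure_iUnion_le _).trans (ENNReal.tsum_le_tsum hblock))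

lemma measure_exists_sqrt_lt_abs_mean_sub_le {Y : ℕ → Ω → ℝ} {m : ℝ}
    (hYm : ∀ s, StronglyMeasurable (Y s)) (hind : iIndepFun Y μ) (hmean : ∀ s, μ[Y s] = m)
    (hsg : ∀ s, HasSubgaussianMGF (fun ω => Y s ω - m) c μ)
    (hc : 0 < c) {L : ℕ → ℝ} (hL : MonotoneOn L (Set.Ici 1)) (hL0 : ∀ t, 1 ≤ t → 0 ≤ L t) :
    μ {ω | ∃ t, 1 ≤ t ∧ √(4 * c * L t / t) < |(1 / t : ℝ) * ∑ s ∈ range t, Y s ω - m|} ≤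
      2 * ∑' k, ENNReal.ofReal (exp (-L (2 ^ k))) := by
  set Z : ℕ → Ω → ℝ := fun s ω => Y s ω - m
  have hZm (s : ℕ) : StronglyMeasurable (Z s) := (hYm s).sub stronglyMeasurable_const
  have hZind : iIndepFun Z μ := hind.comp (fun _ x => x - m) fun _ => measurable_sub_const m
  have hZ0 (s : ℕ) : μ[Z s] = 0 := by
    have hYint : Integrable (Y s) μ :=
      ((hsg s).integrable.add (integrable_const m)).congr (ae_of_all _ fun ω => by simp)
    simp [Z, integral_sub hYint (integrable_const m), hmean]
  have hupper := measure_exists_sqrt_le_sum_range_le hZm hZind hZ0 hsg hc hL hL0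
  have hlower := measure_exists_sqrt_le_sum_range_le (fun s => (hZm s).neg)
    (hZind.comp (fun _ x => -x) fun _ => measurable_neg) (fun s => by simp [integral_neg, hZ0 s])
    (fun s => (hsg s).neg) hc hL hL0
  refine (measure_mono ?_).trans ((measure_union_le _ _).trans
    ((add_le_add hupper hlower).trans_eq (two_mul _).symm))
  rintro ω ⟨t, ht, hω⟩
  have htpos : (0 : ℝ) < t := by exact_mod_cast ht
  have hsum : (1 / t : ℝ) * ∑ s ∈ range t, Y s ω - m = (∑ s ∈ range t, Z s ω) / t := by
    simp only [Z, Finset.sum_sub_distrib, Finset.sum_const, Finset.card_range, nsmul_eq_mul]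
    field_simp
  rw [hsum, abs_div, abs_of_pos htpos, lt_div_iff₀ htpos, Real.sqrt_div_mul_self htpos,
    show (t : ℝ) * (4 * c * L t) = 4 * c * t * L t by ring] at hω
  rcases le_abs'.mp hω.le with h | h
  · right
    exact ⟨t, ht, by simpa only [Pi.neg_apply, Finset.sum_neg_distrib] using le_neg.mpr h⟩
  · exact Or.inl ⟨t, ht, h⟩

lemma measure_exists_sqrt_lt_abs_mean_sub_le_of_mem_Icc {Y : ℕ → Ω → ℝ} {m : ℝ}
    (hYm : ∀ s, Measurable (Y s)) (hind : iIndepFun Y μ)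
    (hbdd : ∀ s ω, Y s ω ∈ Set.Icc (0 : ℝ) 1) (hmean : ∀ s, μ[Y s] = m)
    {L : ℕ → ℝ} (hL : MonotoneOn L (Set.Ici 1)) (hL0 : ∀ t, 1 ≤ t → 0 ≤ L t) :
    μ {ω | ∃ t, 1 ≤ t ∧ √(L t / t) < |(1 / t : ℝ) * ∑ s ∈ range t, Y s ω - m|} ≤
      2 * ∑' k, ENNReal.ofReal (exp (-L (2 ^ k))) := by
  have hsg (s : ℕ) :
      HasSubgaussianMGF (fun ω => Y s ω - m) ((‖(1 : ℝ) - 0‖₊ / 2) ^ 2) μ :=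
    hmean s ▸ hasSubgaussianMGF_of_mem_Icc (hYm s).aemeasurable (ae_of_all _ (hbdd s))
  have h := measure_exists_sqrt_lt_abs_mean_sub_le (fun s => (hYm s).stronglyMeasurable) hind
    hmean hsg (by norm_num) hL hL0
  convert h using 7
  norm_num

end ProbabilityTheory

/-- The paper's `β(t, δ')`. -/
noncomputable def lilBeta (δ' : ℝ) (t : ℕ) : ℝ := 2 * log (125 * log (1.12 * t) / δ')

section lilBeta

variable {a : ℝ}

lemma one_div_ten_le_log_one_point_one_two : (0.1 : ℝ) ≤ log 1.12 := by
  have := one_sub_inv_le_log_of_pos (show (0 : ℝ) < 1.12 by norm_num)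
  norm_num at this ⊢
  linarith

lemma ten_le_lilBeta_arg (ha0 : 0 < a) (ha1 : a ≤ 1) {t : ℕ} (ht : 1 ≤ t) :
    10 ≤ 125 * log (1.12 * t) / a := by
  have ht' : (1 : ℝ) ≤ t := by exact_mod_cast ht
  have hlog : log 1.12 ≤ log (1.12 * t) := log_le_log (by norm_num) (by nlinarith)
  rw [le_div_iff₀ ha0]
  nlinarith [one_div_ten_le_log_one_point_one_two]

lemma two_mul_lilBeta_nonneg (ha0 : 0 < a) (ha1 : a ≤ 1) {t : ℕ} (ht : 1 ≤ t) :
    0 ≤ 2 * lilBeta a t := by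
  have harg := ten_le_lilBeta_arg ha0 ha1 ht
  have hlog := log_nonneg (by linarith : (1 : ℝ) ≤ 125 * log (1.12 * t) / a)
  unfold lilBeta
  positivity

lemma monotoneOn_two_mul_lilBeta (ha0 : 0 < a) :
    MonotoneOn (fun t => 2 * lilBeta a t) (Set.Ici 1) := by
  intro u hu t _ hut
  have hu' : (1 : ℝ) ≤ u := by exact_mod_cast hu
  have hut' : (u : ℝ) ≤ t := by exact_mod_cast hut
  have hlog : log (1.12 * u) ≤ log (1.12 * t) := log_le_log (by positivity) (by linarith)
  have hlog0 : 0 < log (1.12 * u) := log_pos (by nlinarith)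
  simp only [lilBeta]
  gcongr

lemma exp_neg_two_mul_lilBeta_two_pow_le (ha0 : 0 < a) (ha1 : a ≤ 1) (k : ℕ) :
    exp (-(2 * lilBeta a (2 ^ k))) ≤ a / 10 ^ 4 * (1 / ((k : ℝ) + 1) ^ 4) := by
  set Q := 125 * log (1.12 * ((2 ^ k : ℕ) : ℝ)) / a
  have hlog : 0.1 * ((k : ℝ) + 1) ≤ log (1.12 * ((2 ^ k : ℕ) : ℝ)) := by
    push_cast
    rw [log_mul (by norm_num) (by positivity), log_pow]
    nlinarith [one_div_ten_le_log_one_point_one_two, log_two_gt_d9, (k.cast_nonneg : (0 : ℝ) ≤ k)]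
  have hQ : 10 * ((k : ℝ) + 1) / a ≤ Q := by
    rw [div_le_div_iff_of_pos_right ha0]
    linarith
  have hexp : exp (-(2 * lilBeta a (2 ^ k))) = (Q ^ 4)⁻¹ := by
    have hQ0 : 0 < Q := lt_of_lt_of_le (by positivity) hQ
    rw [show -(2 * lilBeta a (2 ^ k)) = -log (Q ^ 4) by simp only [lilBeta, Q, log_pow]; ring,
      exp_neg, exp_log (pow_pos hQ0 4)]
  have ha4 : a ^ 4 ≤ a := pow_le_of_le_one ha0.le ha1 (by norm_num)
  calc exp (-(2 * lilBeta a (2 ^ k))) = (Q ^ 4)⁻¹ := hexp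
    _ ≤ ((10 * ((k : ℝ) + 1) / a) ^ 4)⁻¹ := by gcongr
    _ = a ^ 4 / 10 ^ 4 * (1 / ((k : ℝ) + 1) ^ 4) := by field_simp
    _ ≤ a / 10 ^ 4 * (1 / ((k : ℝ) + 1) ^ 4) := by gcongr

lemma two_mul_tsum_exp_neg_two_mul_lilBeta_le (ha0 : 0 < a) (ha1 : a ≤ 1) :
    2 * ∑' k, ENNReal.ofReal (exp (-(2 * lilBeta a (2 ^ k)))) ≤ ENNReal.ofReal a := by
  have hzeta : HasSum (fun k : ℕ => 1 / ((k : ℝ) + 1) ^ 4) (π ^ 4 / 90) := by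
    simpa using (hasSum_nat_add_iff' 1).mpr hasSum_zeta_four
  have hsum : HasSum (fun k : ℕ => a / 10 ^ 4 * (1 / ((k : ℝ) + 1) ^ 4))
      (a / 10 ^ 4 * (π ^ 4 / 90)) := hzeta.mul_left _
  calc 2 * ∑' k, ENNReal.ofReal (exp (-(2 * lilBeta a (2 ^ k))))
      ≤ 2 * ∑' k : ℕ, ENNReal.ofReal (a / 10 ^ 4 * (1 / ((k : ℝ) + 1) ^ 4)) := by
        gcongr with k
        exact exp_neg_two_mul_lilBeta_two_pow_le ha0 ha1 k
    _ = ENNReal.ofReal (2 * (a / 10 ^ 4 * (π ^ 4 / 90))) := by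
        rw [← ENNReal.ofReal_tsum_of_nonneg (fun k => by positivity) hsum.summable,
          hsum.tsum_eq, ENNReal.ofReal_mul zero_le_two, ENNReal.ofReal_ofNat]
    _ ≤ ENNReal.ofReal a := by
        refine ENNReal.ofReal_le_ofReal ?_
        have : π ^ 4 < 4 ^ 4 := by gcongr; exact pi_lt_four
        nlinarith

end lilBeta

/-- Lemma 1 in "Adaptive Estimation for Approximate k-Nearest-Neighbor
Computations" (a non-asymptotic law of the iterated logarithm following
Kaufmann–Cappé–Garivier): for mutually independent `[0,1]`-valued samples
`X i t` with mean `d i`, with probability at least `1 - δ`, simultaneously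
for all items `i` and all sample counts `t ≥ 1`, the empirical mean is within
`α_i(t) = √(2 β(t, δ/n) / t)` of `d i`, where
`β(t, δ') = 2 log(125 log(1.12 t) / δ')`.
(The empirical mean after `t` samples is `(1/t) ∑_{s < t} X i s`.) -/
theorem adaptive_knn_lil
    {Ω : Type*} [MeasurableSpace Ω] (P : Measure Ω) [IsProbabilityMeasure P]
    (n : ℕ) (hn : 1 ≤ n) (δ : ℝ) (hδ0 : 0 < δ) (hδ1 : δ < 1)
    (X : Fin n → ℕ → Ω → ℝ) (d : Fin n → ℝ)
    (hmeas : ∀ i t, Measurable (X i t))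
    (hbdd : ∀ i t ω, X i t ω ∈ Set.Icc (0 : ℝ) 1)
    (hmean : ∀ i t, ∫ ω, X i t ω ∂P = d i)
    (hindep : iIndepFun
      (fun p : Fin n × ℕ => X p.1 p.2) P) :
    ENNReal.ofReal (1 - δ) ≤
      P {ω | ∀ i : Fin n, ∀ t : ℕ, 1 ≤ t →
        |(1 / t : ℝ) * ∑ s ∈ Finset.range t, X i s ω - d i| ≤
          Real.sqrt (2 * (2 * Real.log (125 * Real.log (1.12 * t) / (δ / n))) / t)} := by
  have hn' : (1 : ℝ) ≤ n := by exact_mod_cast hn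
  have ha0 : 0 < δ / n := by positivity
  have ha1 : δ / n ≤ 1 := (div_le_one (by positivity)).mpr (by linarith)
  have hitem (i : Fin n) : P {ω | ∃ t, 1 ≤ t ∧ √(2 * lilBeta (δ / n) t / t) <
      |(1 / t : ℝ) * ∑ s ∈ range t, X i s ω - d i|} ≤ ENNReal.ofReal (δ / n) :=
    (measure_exists_sqrt_lt_abs_mean_sub_le_of_mem_Icc (hmeas i)
      (hindep.precomp (g := Prod.mk i) (Prod.mk_right_injective i)) (hbdd i) (hmean i)
      (monotoneOn_two_mul_lilBeta ha0) (fun t => two_mul_lilBeta_nonneg ha0 ha1)).trans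
      (two_mul_tsum_exp_neg_two_mul_lilBeta_le ha0 ha1)
  refine ofReal_one_sub_le_of_measure_compl_le hδ0.le ?_
  calc _ ≤ P (⋃ i, {ω | ∃ t, 1 ≤ t ∧ √(2 * lilBeta (δ / n) t / t) <
          |(1 / t : ℝ) * ∑ s ∈ range t, X i s ω - d i|}) := by
        refine measure_mono fun ω hω => ?_
        simp only [Set.mem_compl_iff, Set.mem_ofPred_eq, not_forall, not_le] at hω
        obtain ⟨i, t, ht, hlt⟩ := hω
        exact Set.mem_iUnion.mpr ⟨i, t, ht, hlt⟩
    _ ≤ ∑ i : Fin n, ENNReal.ofReal (δ / n) :=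
        (measure_iUnion_fintype_le _ _).trans (Finset.sum_le_sum fun i _ => hitem i)
    _ = ENNReal.ofReal δ := by
        rw [Finset.sum_const, Finset.card_univ, Fintype.card_fin, nsmul_eq_mul,
          ← ENNReal.ofReal_natCast, ← ENNReal.ofReal_mul (by positivity),
          mul_div_cancel₀ _ (by positivity)]
end
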